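/- arXiv:0902.1917 — 2 statements merged into one kernel-verified Lean document; each statement's English description precedes it below -/
import Mathlib

section
/- Let 𝒞 be the annulus {y ∈ ℝ^d : ‖x‖ − ε ≤ ‖y − x‖ ≤ ‖x‖} centered at x ∈ ℝ^d with ‖x‖ > 1 and thickness ε ∈ (0,1]. Then for every ρ ∈ [ε, 1], the normalized uniform measure σ_ρ on the sphere S_ρ of radius ρ centered at the origin satisfies σ_ρ(S_ρ ∩ 𝒞) ≥ c_d · ε/ρ, for some constant c_d > 0 depending only on the dimension d ≥ 2. -/
/-!
For `y ∈ S_ρ` write `‖y - x‖² = ρ² - 2 ‖x‖ ⟪y, u⟫ + ‖x‖²` with `u = x / ‖x‖`: the slab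
`t ≤ ⟪y, u⟫ ≤ t + ε / 4` of `S_ρ`, where `t = ρ² / (2 ‖x‖)`, lies in the annulus. After a
reflection taking `u` to the first basis vector, forgetting the last coordinate is a 1-Lipschitz map
from that slab onto a set containing a box of volume `≳ ε ρ^(d-2)`, which bounds its
`(d-1)`-dimensional Hausdorff measure from below. On the other hand
`μH[d-1] S_ρ = ρ^(d-1) μH[d-1] S_1`, and `μH[d-1] S_1 < ∞` since the central projections of the
hyperplanes tangent at `±eᵢ` are 2-Lipschitz and cover `S_1` by images of bounded sets of `ℝ^(d-1)`.
-/

open MeasureTheory Metric Filter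
open scoped MeasureTheory ENNReal

open Set Module
open scoped NNReal Pointwise RealInnerProductSpace

lemma dist_inv_norm_smul_le_two_mul {F : Type*} [NormedAddCommGroup F] [NormedSpace ℝ F]
    {y w : F} (hy : 1 ≤ ‖y‖) (hw : 1 ≤ ‖w‖) :
    dist (‖y‖⁻¹ • y) (‖w‖⁻¹ • w) ≤ 2 * dist y w := by
  have hy0 : 0 < ‖y‖ := one_pos.trans_le hy
  have hw0 : 0 < ‖w‖ := one_pos.trans_le hw
  have hsplit : ‖y‖⁻¹ • y - ‖w‖⁻¹ • w = ‖y‖⁻¹ • (y - w) + (‖y‖⁻¹ - ‖w‖⁻¹) • w := by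
    rw [smul_sub, sub_smul]; abel
  have hcoef : |‖y‖⁻¹ - ‖w‖⁻¹| * ‖w‖ = ‖y‖⁻¹ * |‖w‖ - ‖y‖| := by
    rw [inv_sub_inv hy0.ne' hw0.ne', abs_div, abs_mul, abs_of_pos hy0, abs_of_pos hw0]
    field_simp
  rw [dist_eq_norm, dist_eq_norm, hsplit]
  calc ‖‖y‖⁻¹ • (y - w) + (‖y‖⁻¹ - ‖w‖⁻¹) • w‖
      ≤ ‖y‖⁻¹ * ‖y - w‖ + |‖y‖⁻¹ - ‖w‖⁻¹| * ‖w‖ := by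
        refine (norm_add_le _ _).trans_eq ?_
        rw [norm_smul, norm_smul, Real.norm_eq_abs, Real.norm_eq_abs, abs_inv, abs_norm]
    _ ≤ ‖y‖⁻¹ * (2 * ‖y - w‖) := by
        rw [hcoef, ← mul_add, two_mul]
        gcongr
        exact (abs_norm_sub_norm_le w y).trans_eq (norm_sub_rev w y)
    _ ≤ 2 * ‖y - w‖ := mul_le_of_le_one_left (by positivity) (inv_le_one_of_one_le₀ hy)

section InnerProductSpace

variable {E : Type*} [NormedAddCommGroup E] [InnerProductSpace ℝ E]

noncomputable def gnomonicChart (e : E) (z : (ℝ ∙ e)ᗮ) : E := ‖e + z‖⁻¹ • (e + z)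

lemma one_le_norm_add_of_mem_orthogonal {e : E} (he : ‖e‖ = 1) (z : (ℝ ∙ e)ᗮ) :
    1 ≤ ‖e + z‖ := by
  have h := norm_add_sq_eq_norm_sq_add_norm_sq_real
    (Submodule.mem_orthogonal_singleton_iff_inner_right.mp z.2)
  rw [he] at h
  nlinarith [norm_nonneg (e + z), norm_nonneg (z : E)]

lemma lipschitzWith_gnomonicChart {e : E} (he : ‖e‖ = 1) : LipschitzWith 2 (gnomonicChart e) :=
  LipschitzWith.of_dist_le_mul fun z w => by
    simpa [gnomonicChart, dist_add_left, Subtype.dist_eq] using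
      dist_inv_norm_smul_le_two_mul (one_le_norm_add_of_mem_orthogonal he z)
        (one_le_norm_add_of_mem_orthogonal he w)

lemma mem_gnomonicChart_image {e y : E} (he : ‖e‖ = 1) (hy : ‖y‖ = 1) (hye : 0 < ⟪y, e⟫) :
    y ∈ gnomonicChart e '' closedBall 0 (⟪y, e⟫⁻¹ + 1) := by
  set t := ⟪y, e⟫
  have hz : t⁻¹ • y - e ∈ (ℝ ∙ e)ᗮ := by
    rw [Submodule.mem_orthogonal_singleton_iff_inner_right, inner_sub_right, inner_smul_right,
      real_inner_comm, real_inner_self_eq_norm_sq, he, inv_mul_cancel₀ hye.ne']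
    norm_num
  refine ⟨⟨_, hz⟩, ?_, ?_⟩
  · rw [mem_closedBall_zero_iff, Submodule.coe_norm]
    refine (norm_sub_le _ _).trans_eq ?_
    rw [norm_smul, hy, he, Real.norm_eq_abs, abs_inv, abs_of_pos hye, mul_one]
  · simp only [gnomonicChart, add_sub_cancel, norm_smul, hy, Real.norm_eq_abs, abs_inv,
      abs_of_pos hye, mul_one, inv_inv, smul_smul, mul_inv_cancel₀ hye.ne', one_smul]

lemma OrthonormalBasis.exists_inv_card_le_abs_inner {ι : Type*} [Fintype ι] [Nonempty ι]
    (b : OrthonormalBasis ι ℝ E) {y : E} (hy : ‖y‖ = 1) :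
    ∃ i, (Fintype.card ι : ℝ)⁻¹ ≤ |⟪y, b i⟫| := by
  obtain ⟨i, -, hi⟩ := Finset.exists_le_of_sum_le (s := Finset.univ) Finset.univ_nonempty
    (f := fun _ => (Fintype.card ι : ℝ)⁻¹) (g := fun i => ⟪y, b i⟫ ^ 2) (by
      simp [b.sum_sq_inner_left, hy])
  refine ⟨i, hi.trans ?_⟩
  have hle : |⟪y, b i⟫| ≤ 1 := (abs_real_inner_le_norm y (b i)).trans (by simp [hy])
  rw [← sq_abs]
  nlinarith [abs_nonneg ⟪y, b i⟫]

lemma sphere_subset_biUnion_gnomonicChart_image {ι : Type*} [Fintype ι] [Nonempty ι]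
    (b : OrthonormalBasis ι ℝ E) :
    sphere (0 : E) 1 ⊆ ⋃ e ∈ range b ∪ range (-⇑b),
      gnomonicChart e '' closedBall 0 (Fintype.card ι + 1) := by
  intro y hy
  rw [mem_sphere_zero_iff_norm] at hy
  obtain ⟨i, hi⟩ := b.exists_inv_card_le_abs_inner hy
  have hpos : 0 < |⟪y, b i⟫| := (inv_pos.mpr (by simp [Fintype.card_pos])).trans_le hi
  obtain ⟨e, he, hye⟩ : ∃ e ∈ range b ∪ range (-⇑b), ⟪y, e⟫ = |⟪y, b i⟫| := by
    rcases le_or_gt 0 ⟪y, b i⟫ with h | h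
    · exact ⟨b i, .inl ⟨i, rfl⟩, (abs_of_nonneg h).symm⟩
    · exact ⟨-b i, .inr ⟨i, rfl⟩, by rw [inner_neg_right, abs_of_neg h]⟩
  have he1 : ‖e‖ = 1 := by
    rcases he with ⟨j, rfl⟩ | ⟨j, rfl⟩ <;> simp
  refine mem_biUnion he (image_mono (closedBall_subset_closedBall ?_)
    (mem_gnomonicChart_image he1 hy (hye ▸ hpos)))
  rw [hye]
  gcongr
  exact inv_le_of_inv_le₀ (by simp [Fintype.card_pos]) hi

lemma hausdorffMeasure_sphere_zero_one_lt_top [FiniteDimensional ℝ E] [Nontrivial E]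
    [MeasurableSpace E] [BorelSpace E] :
    μH[(finrank ℝ E : ℝ) - 1] (sphere (0 : E) 1) < ∞ := by
  have hpos : 0 < finrank ℝ E := finrank_pos
  have hchart : ∀ e : E, ‖e‖ = 1 → ∀ R : ℝ,
      μH[(finrank ℝ E : ℝ) - 1] (gnomonicChart e '' closedBall 0 R) < ∞ := by
    intro e he R
    have hdim : (finrank ℝ (ℝ ∙ e)ᗮ : ℝ) = finrank ℝ E - 1 := by
      have := Submodule.finrank_add_finrank_orthogonal (ℝ ∙ e)
      rw [finrank_span_singleton (by simp [← norm_ne_zero_iff, he])] at this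
      rw [← this]; push_cast; ring
    rw [← hdim]
    refine ((lipschitzWith_gnomonicChart he).hausdorffMeasure_image_le (by positivity) _).trans_lt
      (ENNReal.mul_lt_top (by simp) (isCompact_closedBall _ _).measure_lt_top)
  let b := stdOrthonormalBasis ℝ E
  have : Nonempty (Fin (finrank ℝ E)) := ⟨⟨0, hpos⟩⟩
  refine (measure_mono (sphere_subset_biUnion_gnomonicChart_image b)).trans_lt
    (measure_biUnion_lt_top ((finite_range _).union (finite_range _)) fun e he => hchart e ?_ _)
  rcases he with ⟨j, rfl⟩ | ⟨j, rfl⟩ <;> simp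

lemma sphere_inter_slab_subset_annulus {x : E} {ε ρ δ : ℝ} (hε : 0 < ε) (hεx : ε ≤ ‖x‖)
    (hδ : δ ≤ ε / 2) :
    {y | ‖y‖ = ρ ∧ ⟪y, ‖x‖⁻¹ • x⟫ ∈ Icc (ρ ^ 2 / (2 * ‖x‖)) (ρ ^ 2 / (2 * ‖x‖) + δ)} ⊆
      {y | ‖x‖ - ε ≤ ‖y - x‖ ∧ ‖y - x‖ ≤ ‖x‖} ∩ sphere 0 ρ := by
  rintro y ⟨hy, hlo, hhi⟩
  have hx : 0 < ‖x‖ := hε.trans_le hεx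
  have hs : ⟪y, ‖x‖⁻¹ • x⟫ * (2 * ‖x‖) = 2 * ⟪y, x⟫ := by
    rw [real_inner_smul_right]; field_simp
  have hlo' : ρ ^ 2 ≤ 2 * ⟪y, x⟫ := hs ▸ (div_le_iff₀ (by positivity)).mp hlo
  have hhi' : 2 * ⟪y, x⟫ ≤ ρ ^ 2 + ε * ‖x‖ := by
    have := mul_le_mul_of_nonneg_right hhi (by positivity : (0 : ℝ) ≤ 2 * ‖x‖)
    rw [hs, add_mul, div_mul_cancel₀ _ (by positivity)] at this
    nlinarith
  have hsq : ‖y - x‖ ^ 2 = ρ ^ 2 - 2 * ⟪y, x⟫ + ‖x‖ ^ 2 := by rw [norm_sub_sq_real, hy]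
  refine ⟨⟨?_, ?_⟩, mem_sphere_zero_iff_norm.mpr hy⟩
  · rw [← sq_le_sq₀ (sub_nonneg.mpr hεx) (norm_nonneg _)]
    nlinarith
  · rw [← sq_le_sq₀ (norm_nonneg _) (norm_nonneg _)]
    linarith

end InnerProductSpace

lemma hausdorffMeasure_sphere_zero_eq_rpow_mul {F : Type*} [NormedAddCommGroup F]
    [NormedSpace ℝ F] [MeasurableSpace F] [BorelSpace F] {d r : ℝ} (hd : 0 ≤ d) (hr : 0 < r) :
    μH[d] (sphere (0 : F) r) = ENNReal.ofReal (r ^ d) * μH[d] (sphere (0 : F) 1) := by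
  have hsphere : sphere (0 : F) r = r • sphere 0 1 := by
    simp [smul_sphere' hr.ne', abs_of_pos hr]
  have hnorm : ((‖r‖₊ : ℝ≥0) : ℝ≥0∞) = ENNReal.ofReal r := by
    rw [Real.nnnorm_of_nonneg hr.le, ENNReal.ofReal_eq_coe_nnreal]
  rw [hsphere, Measure.hausdorffMeasure_smul₀ hd hr.ne', ENNReal.smul_def, smul_eq_mul,
    ENNReal.coe_rpow_of_nonneg _ hd, hnorm, ENNReal.ofReal_rpow_of_nonneg hr.le hd]

lemma volume_ofLp_image_le_hausdorffMeasure {ι : Type*} [Fintype ι]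
    (A : Set (EuclideanSpace ℝ ι)) : volume (WithLp.ofLp '' A) ≤ μH[Fintype.card ι] A := by
  simpa [← hausdorffMeasure_pi_real] using
    (PiLp.lipschitzWith_ofLp 2 fun _ : ι => ℝ).hausdorffMeasure_image_le (by positivity) A

namespace EuclideanSpace

def dropLast {n : ℕ} (y : EuclideanSpace ℝ (Fin (n + 1))) : EuclideanSpace ℝ (Fin n) :=
  WithLp.toLp 2 (Fin.init y.ofLp)

lemma lipschitzWith_dropLast (n : ℕ) : LipschitzWith 1 (dropLast (n := n)) :=
  LipschitzWith.of_dist_le_mul fun y w => by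
    rw [NNReal.coe_one, one_mul, EuclideanSpace.dist_eq, EuclideanSpace.dist_eq,
      Fin.sum_univ_castSucc (fun i => dist (y i) (w i) ^ 2)]
    exact Real.sqrt_le_sqrt (le_add_of_nonneg_right (sq_nonneg _))

lemma closedBall_subset_dropLast_image_sphere {n : ℕ} {ρ : ℝ} :
    closedBall (0 : EuclideanSpace ℝ (Fin n)) ρ ⊆ dropLast '' sphere 0 ρ := by
  intro w hw
  rw [mem_closedBall_zero_iff] at hw
  have hρ : 0 ≤ ρ := (norm_nonneg w).trans hw
  refine ⟨WithLp.toLp 2 (Fin.snoc w.ofLp √(ρ ^ 2 - ‖w‖ ^ 2)), ?_, by simp [dropLast]⟩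
  rw [mem_sphere_zero_iff_norm, ← sq_eq_sq₀ (norm_nonneg _) hρ, EuclideanSpace.real_norm_sq_eq,
    Fin.sum_univ_castSucc]
  simp only [Fin.snoc_castSucc, Fin.snoc_last]
  rw [Real.sq_sqrt (by nlinarith [norm_nonneg w]), ← EuclideanSpace.real_norm_sq_eq]
  ring

lemma ofLp_preimage_box_subset_dropLast_image {m : ℕ} {ρ t δ : ℝ} (hρ : 0 < ρ) (ht : 0 ≤ t)
    (htδ : t + δ ≤ 3 / 4 * ρ) :
    WithLp.ofLp ⁻¹' univ.pi (Fin.cons (Icc t (t + δ)) fun _ => Icc (-(ρ / (2 * (m + 1))))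
        (ρ / (2 * (m + 1)))) ⊆
      dropLast '' {y : EuclideanSpace ℝ (Fin (m + 2)) | ‖y‖ = ρ ∧ y 0 ∈ Icc t (t + δ)} := by
  set g := ρ / (2 * (m + 1))
  intro w hw
  have hw0 : w 0 ∈ Icc t (t + δ) := by simpa using hw 0 (mem_univ _)
  have hwsucc (j : Fin m) : |w j.succ| ≤ g := abs_le.mpr (by simpa using hw j.succ (mem_univ _))
  have hsum : ∑ j : Fin m, w j.succ ^ 2 ≤ m * g ^ 2 := by
    simpa using Finset.sum_le_sum fun j (_ : j ∈ Finset.univ) =>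
      (sq_le_sq' (abs_le.mp (hwsucc j)).1 (abs_le.mp (hwsucc j)).2)
  have hg : m * g ^ 2 ≤ ρ ^ 2 / 4 := by
    simp only [g, div_pow, mul_pow, ← mul_div_assoc]
    rw [div_le_div_iff₀ (by positivity) (by positivity)]
    have hm : (m : ℝ) ≤ (m + 1) ^ 2 := by nlinarith
    nlinarith [mul_le_mul_of_nonneg_left hm (sq_nonneg ρ)]
  have hnorm : ‖w‖ ≤ ρ := by
    rw [← sq_le_sq₀ (norm_nonneg _) hρ.le, EuclideanSpace.real_norm_sq_eq, Fin.sum_univ_succ]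
    nlinarith [hw0.1, hw0.2]
  obtain ⟨y, hy, rfl⟩ :=
    closedBall_subset_dropLast_image_sphere (mem_closedBall_zero_iff.mpr hnorm)
  exact ⟨y, ⟨mem_sphere_zero_iff_norm.mp hy, hw0⟩, rfl⟩

end EuclideanSpace

open EuclideanSpace in
lemma le_hausdorffMeasure_sphere_inter_coord_slab {m : ℕ} {ρ t δ : ℝ} (hρ : 0 < ρ) (ht : 0 ≤ t)
    (htδ : t + δ ≤ 3 / 4 * ρ) :
    ENNReal.ofReal (δ * (ρ / (m + 1)) ^ m) ≤
      μH[(m : ℝ) + 1] {y : EuclideanSpace ℝ (Fin (m + 2)) | ‖y‖ = ρ ∧ y 0 ∈ Icc t (t + δ)} := by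
  set g := ρ / (2 * (m + 1))
  set box : Set (Fin (m + 1) → ℝ) := univ.pi (Fin.cons (Icc t (t + δ)) fun _ => Icc (-g) g)
  have hvol : volume box = ENNReal.ofReal (δ * (ρ / (m + 1)) ^ m) := by
    rw [volume_pi_pi, Fin.prod_univ_succ, ENNReal.ofReal_mul' (by positivity),
      ENNReal.ofReal_pow (by positivity)]
    have hwidth : g - -g = ρ / (m + 1) := by simp only [g]; field_simp; ring
    simp only [Fin.cons_zero, Fin.cons_succ, Real.volume_Icc, hwidth, add_sub_cancel_left,
      Finset.prod_const, Finset.card_univ, Fintype.card_fin]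
  calc ENNReal.ofReal (δ * (ρ / (m + 1)) ^ m)
        = volume (WithLp.ofLp '' (WithLp.ofLp ⁻¹' box)) := by
        rw [image_preimage_eq _ (WithLp.ofLp_surjective 2), hvol]
    _ ≤ μH[(m : ℝ) + 1] (WithLp.ofLp ⁻¹' box) := by
        simpa using volume_ofLp_image_le_hausdorffMeasure (WithLp.ofLp ⁻¹' box)
    _ ≤ μH[(m : ℝ) + 1] (dropLast '' {y | ‖y‖ = ρ ∧ y 0 ∈ Icc t (t + δ)}) :=
        measure_mono (ofLp_preimage_box_subset_dropLast_image hρ ht htδ)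
    _ ≤ μH[(m : ℝ) + 1] {y : EuclideanSpace ℝ (Fin (m + 2)) | ‖y‖ = ρ ∧ y 0 ∈ Icc t (t + δ)} := by
        simpa using (lipschitzWith_dropLast (m + 1)).hausdorffMeasure_image_le (by positivity) _

lemma le_hausdorffMeasure_sphere_inter_slab {m : ℕ} {u : EuclideanSpace ℝ (Fin (m + 2))}
    (hu : ‖u‖ = 1) {ρ t δ : ℝ} (hρ : 0 < ρ) (ht : 0 ≤ t) (htδ : t + δ ≤ 3 / 4 * ρ) :
    ENNReal.ofReal (δ * (ρ / (m + 1)) ^ m) ≤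
      μH[(m : ℝ) + 1] {y | ‖y‖ = ρ ∧ ⟪y, u⟫ ∈ Icc t (t + δ)} := by
  set e₀ : EuclideanSpace ℝ (Fin (m + 2)) := EuclideanSpace.single 0 1
  set R := (ℝ ∙ (e₀ - u))ᗮ.reflection
  have hRe : R e₀ = u := Submodule.reflection_sub (by simp [e₀, hu])
  refine (le_hausdorffMeasure_sphere_inter_coord_slab hρ ht htδ).trans ?_
  rw [← R.isometry.hausdorffMeasure_image (Or.inl (by positivity))]
  refine measure_mono ?_
  rintro _ ⟨y, ⟨hy, hy0⟩, rfl⟩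
  refine ⟨by simpa using hy, ?_⟩
  rw [← hRe, LinearIsometryEquiv.inner_map_map]
  simpa [e₀, EuclideanSpace.inner_single_right] using hy0

lemma le_hausdorffMeasure_annulus_inter_sphere {m : ℕ} {x : EuclideanSpace ℝ (Fin (m + 2))}
    {ε ρ : ℝ} (hε : 0 < ε) (hερ : ε ≤ ρ) (hρx : ρ ≤ ‖x‖) :
    ENNReal.ofReal (ε / 4 * (ρ / (m + 1)) ^ m) ≤
      μH[(m : ℝ) + 1] ({y | ‖x‖ - ε ≤ ‖y - x‖ ∧ ‖y - x‖ ≤ ‖x‖} ∩ sphere 0 ρ) := by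
  have hρ : 0 < ρ := hε.trans_le hερ
  have hx : 0 < ‖x‖ := hρ.trans_le hρx
  have ht : ρ ^ 2 / (2 * ‖x‖) ≤ ρ / 2 := by
    rw [div_le_div_iff₀ (by positivity) (by positivity)]
    nlinarith
  refine (le_hausdorffMeasure_sphere_inter_slab (u := ‖x‖⁻¹ • x) ?_ hρ (by positivity)
    (by linarith)).trans (measure_mono (sphere_inter_slab_subset_annulus hε (hερ.trans hρx)
      (by linarith)))
  rw [norm_smul, norm_inv, norm_norm, inv_mul_cancel₀ hx.ne']

theorem averages_on_annuli_stmt3 (d : ℕ) (hd : 2 ≤ d) :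
    ∃ c : ℝ, 0 < c ∧
      ∀ (x : EuclideanSpace ℝ (Fin d)) (ε ρ : ℝ), 1 < ‖x‖ →
        0 < ε → ε ≤ 1 → ε ≤ ρ → ρ ≤ 1 →
        ENNReal.ofReal (c * ε / ρ) ≤
          ((μH[(d : ℝ) - 1] (sphere (0 : EuclideanSpace ℝ (Fin d)) ρ))⁻¹ •
              (μH[(d : ℝ) - 1] : Measure (EuclideanSpace ℝ (Fin d))).restrict
                (sphere (0 : EuclideanSpace ℝ (Fin d)) ρ))
            {y : EuclideanSpace ℝ (Fin d) | ‖x‖ - ε ≤ ‖y - x‖ ∧ ‖y - x‖ ≤ ‖x‖} := by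
  obtain ⟨m, rfl⟩ : ∃ m, d = m + 2 := ⟨d - 2, by omega⟩
  have hexp : ((m + 2 : ℕ) : ℝ) - 1 = m + 1 := by push_cast; ring
  set M := (μH[(m : ℝ) + 1] (sphere (0 : EuclideanSpace ℝ (Fin (m + 2))) 1)).toReal
  have hM : μH[(m : ℝ) + 1] (sphere (0 : EuclideanSpace ℝ (Fin (m + 2))) 1) < ∞ := by
    have := hausdorffMeasure_sphere_zero_one_lt_top (E := EuclideanSpace ℝ (Fin (m + 2)))
    rwa [finrank_euclideanSpace_fin, hexp] at this
  have hM0 : 0 ≤ M := ENNReal.toReal_nonneg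
  refine ⟨(1 / (m + 1)) ^ m / (4 * (M + 1)), by positivity, fun x ε ρ hx hε hε1 hερ hρ1 => ?_⟩
  have hρ : 0 < ρ := hε.trans_le hερ
  have hden : μH[(m : ℝ) + 1] (sphere (0 : EuclideanSpace ℝ (Fin (m + 2))) ρ) ≤
      ENNReal.ofReal (ρ ^ (m + 1) * (M + 1)) := by
    rw [hausdorffMeasure_sphere_zero_eq_rpow_mul (by positivity) hρ,
      ENNReal.ofReal_mul (by positivity), ← Real.rpow_natCast, Nat.cast_succ]
    exact mul_le_mul_right
      ((ENNReal.le_ofReal_iff_toReal_le (b := M + 1) hM.ne (by linarith)).mpr (by linarith)) _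
  rw [hexp, Measure.smul_apply, Measure.restrict_apply' isClosed_sphere.measurableSet, smul_eq_mul,
    ← ENNReal.div_eq_inv_mul]
  calc ENNReal.ofReal ((1 / (m + 1)) ^ m / (4 * (M + 1)) * ε / ρ)
      = ENNReal.ofReal (ε / 4 * (ρ / (m + 1)) ^ m) / ENNReal.ofReal (ρ ^ (m + 1) * (M + 1)) := by
        rw [← ENNReal.ofReal_div_of_pos (by positivity)]
        congr 1
        field_simp
        ring
    _ ≤ _ := ENNReal.div_le_div
        (le_hausdorffMeasure_annulus_inter_sphere hε hερ (hρ1.trans hx.le)) hden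
end

section
/- If the thickness function satisfies e(r) → ∞ as r → ∞, then the family of annuli (C_{r,e(r)})_{r>0} in ℝ^d, d ≥ 2, is a Følner family: for every t ∈ ℝ^d, |C_{r,e(r)} Δ (t + C_{r,e(r)})| / |C_{r,e(r)}| → 0 as r → ∞, where Δ is symmetric difference. -/
open MeasureTheory Metric Filter Set Module Topology
open scoped ENNReal symmDiff

/-! Translating by `t` changes norms by at most `‖t‖`, so the symmetric difference of the shell
`r - e ≤ ‖x‖ ≤ r` and its translate lies in the two shells of width `2‖t‖` around the spheres of
radii `r` and `r - e`. Since Haar measure scales like `ρ ^ d`, these have measure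
`O(‖t‖ (r + ‖t‖) ^ (d - 1))`, whereas the annulus has measure at least `e r ^ (d - 1)` (both in units
of the unit ball), so the ratio is `O(‖t‖ / e(r)) → 0`. -/

/-- The annulus `{t : r - e ≤ ‖t‖ ≤ r}` in `ℝ^d`. -/
def annulus (d : ℕ) (r e : ℝ) : Set (EuclideanSpace ℝ (Fin d)) :=
  {t | r - e ≤ ‖t‖ ∧ ‖t‖ ≤ r}

lemma pow_sub_pow_le_mul_pow_pred {s R : ℝ} (hs : 0 ≤ s) (hsR : s ≤ R) (n : ℕ) :
    R ^ n - s ^ n ≤ (R - s) * n * R ^ (n - 1) := by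
  have h := abs_pow_sub_pow_le R s n
  rwa [abs_of_nonneg (sub_nonneg.2 (pow_le_pow_left₀ hs hsR n)), abs_of_nonneg (sub_nonneg.2 hsR),
    abs_of_nonneg hs, abs_of_nonneg (hs.trans hsR), max_eq_left hsR] at h

lemma mul_pow_pred_le_pow_sub_pow {s R : ℝ} (hs : 0 ≤ s) (hsR : s ≤ R) {n : ℕ} (hn : n ≠ 0) :
    (R - s) * R ^ (n - 1) ≤ R ^ n - s ^ n := by
  obtain ⟨m, rfl⟩ := Nat.exists_eq_succ_of_ne_zero hn
  calc (R - s) * R ^ (m + 1 - 1) = R ^ (m + 1) - s * R ^ m := by simp only [Nat.add_sub_cancel]; ring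
    _ ≤ R ^ (m + 1) - s ^ (m + 1) := by
      rw [pow_succ' s]
      gcongr

lemma mem_Icc_sub_add_of_abs_sub_le {s R a u v : ℝ} (huv : |u - v| ≤ a)
    (h : Xor (u ∈ Icc s R) (v ∈ Icc s R)) : u ∈ Icc (R - a) (R + a) ∪ Icc (s - a) (s + a) := by
  rw [abs_le] at huv
  simp only [Xor, mem_Icc, mem_union, not_and_or, not_le] at h ⊢
  rcases h with ⟨⟨hsu, huR⟩, hv | hv⟩ | ⟨⟨hsv, hvR⟩, hu | hu⟩
  · right; constructor <;> linarith
  · left; constructor <;> linarith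
  · right; constructor <;> linarith
  · left; constructor <;> linarith

section Shell

variable {E : Type*} [NormedAddCommGroup E]

lemma symmDiff_image_add_preimage_norm_Icc_subset (t : E) (s R : ℝ) :
    ((‖·‖) ⁻¹' Icc s R) ∆ ((t + ·) '' ((‖·‖) ⁻¹' Icc s R)) ⊆
      (‖·‖) ⁻¹' (Icc (R - ‖t‖) (R + ‖t‖) ∪ Icc (s - ‖t‖) (s + ‖t‖)) := by
  intro x hx
  rw [image_add_left, mem_symmDiff] at hx
  refine mem_Icc_sub_add_of_abs_sub_le (v := ‖-t + x‖) ?_ ?_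
  · simpa using abs_norm_sub_norm_le x (-t + x)
  · simpa [Xor] using hx

variable [NormedSpace ℝ E] [MeasurableSpace E] [BorelSpace E] [FiniteDimensional ℝ E]
  [Nontrivial E] (μ : Measure E) [μ.IsAddHaarMeasure]

lemma measure_preimage_norm_Icc {s R : ℝ} (hs : 0 ≤ s) (hsR : s ≤ R) :
    μ ((‖·‖) ⁻¹' Icc s R) = ENNReal.ofReal (R ^ finrank ℝ E - s ^ finrank ℝ E) * μ (ball 0 1) := by
  have hshell : (‖·‖ : E → ℝ) ⁻¹' Icc s R = closedBall (0 : E) R \ ball 0 s := by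
    ext x; simp [and_comm]
  rw [hshell, measure_sdiff (ball_subset_ball hsR |>.trans ball_subset_closedBall)
      measurableSet_ball.nullMeasurableSet measure_ball_lt_top.ne,
    Measure.addHaar_closedBall _ _ (hs.trans hsR), Measure.addHaar_ball _ _ hs,
    ENNReal.ofReal_sub _ (by positivity), ENNReal.sub_mul fun _ _ => measure_ball_lt_top.ne]

lemma measure_preimage_norm_Icc_le {s R : ℝ} (hR : 0 ≤ R) (hsR : s ≤ R) :
    μ ((‖·‖) ⁻¹' Icc s R) ≤
      ENNReal.ofReal ((R - s) * finrank ℝ E * R ^ (finrank ℝ E - 1)) * μ (ball 0 1) := by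
  have hnonneg : (‖·‖ : E → ℝ) ⁻¹' Icc s R = (‖·‖) ⁻¹' Icc (max s 0) R := by
    ext x; simp [norm_nonneg]
  rw [hnonneg, measure_preimage_norm_Icc μ (le_max_right _ _) (max_le hsR hR)]
  gcongr
  refine (pow_sub_pow_le_mul_pow_pred (le_max_right _ _) (max_le hsR hR) _).trans ?_
  gcongr
  exact le_max_left _ _

lemma ofReal_mul_le_measure_preimage_norm_Icc {s R : ℝ} (hs : 0 ≤ s)
    (hsR : s ≤ R) :
    ENNReal.ofReal ((R - s) * R ^ (finrank ℝ E - 1)) * μ (ball 0 1) ≤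
      μ ((‖·‖) ⁻¹' Icc s R) := by
  rw [measure_preimage_norm_Icc μ hs hsR]
  gcongr
  exact mul_pow_pred_le_pow_sub_pow hs hsR finrank_pos.ne'

lemma measure_symmDiff_image_add_div_le (t : E) {ε r : ℝ} (hε : 0 < ε) (hεr : ε ≤ r) :
    μ (((‖·‖) ⁻¹' Icc (r - ε) r) ∆ ((t + ·) '' ((‖·‖) ⁻¹' Icc (r - ε) r))) /
        μ ((‖·‖) ⁻¹' Icc (r - ε) r) ≤
      ENNReal.ofReal (4 * ‖t‖ * finrank ℝ E * (r + ‖t‖) ^ (finrank ℝ E - 1) /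
        (ε * r ^ (finrank ℝ E - 1))) := by
  set d := finrank ℝ E
  set a := ‖t‖
  have ha : 0 ≤ a := norm_nonneg t
  have hr : 0 < r := hε.trans_le hεr
  set A := (‖·‖ : E → ℝ) ⁻¹' Icc (r - ε) r
  have hband : ∀ ρ, 0 ≤ ρ → ρ ≤ r → μ ((‖·‖) ⁻¹' Icc (ρ - a) (ρ + a)) ≤
      ENNReal.ofReal (2 * a * d * (r + a) ^ (d - 1)) * μ (ball 0 1) := fun ρ hρ hρr => by
    refine (measure_preimage_norm_Icc_le μ (by linarith) (by linarith)).trans ?_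
    rw [add_sub_sub_cancel, ← two_mul]
    gcongr
  have hnum : μ (A ∆ ((t + ·) '' A)) ≤
      ENNReal.ofReal (4 * a * d * (r + a) ^ (d - 1)) * μ (ball 0 1) :=
    calc _ ≤ μ ((‖·‖) ⁻¹' Icc (r - a) (r + a) ∪ (‖·‖) ⁻¹' Icc (r - ε - a) (r - ε + a)) :=
          measure_mono (symmDiff_image_add_preimage_norm_Icc_subset t _ _)
      _ ≤ _ := measure_union_le _ _
      _ ≤ _ := add_le_add (hband r (by linarith) le_rfl) (hband (r - ε) (by linarith) (by linarith))
      _ = _ := by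
        rw [← add_mul, ← ENNReal.ofReal_add (by positivity) (by positivity)]
        ring_nf
  have hden : ENNReal.ofReal (ε * r ^ (d - 1)) * μ (ball 0 1) ≤ μ A := by
    simpa using ofReal_mul_le_measure_preimage_norm_Icc μ (by linarith) (by linarith : r - ε ≤ r)
  calc _ ≤ _ := ENNReal.div_le_div hnum hden
    _ = _ := ENNReal.mul_div_mul_right _ _ (measure_ball_pos μ 0 one_pos).ne' measure_ball_lt_top.ne
    _ = _ := (ENNReal.ofReal_div_of_pos (by positivity)).symm

end Shell

lemma tendsto_mul_add_pow_div_mul_pow_atTop {e : ℝ → ℝ} (he : Tendsto e atTop atTop)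
    (C a : ℝ) (n : ℕ) : Tendsto (fun r => C * (r + a) ^ n / (e r * r ^ n)) atTop (𝓝 0) := by
  have hlim : Tendsto (fun r => C / e r * (1 + a / r) ^ n) atTop (𝓝 (0 * (1 + 0) ^ n)) :=
    (tendsto_const_nhds.div_atTop he).mul
      ((tendsto_const_nhds.add (tendsto_const_nhds.div_atTop tendsto_id)).pow n)
  rw [zero_mul] at hlim
  refine hlim.congr' ?_
  filter_upwards [eventually_gt_atTop 0] with r hr
  rw [one_add_div hr.ne', div_pow, div_mul_div_comm]

theorem averages_on_annuli_stmt17 (d : ℕ) (hd : 2 ≤ d)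
    (e : ℝ → ℝ) (hpos : ∀ r > 0, 0 < e r) (hle : ∀ r > 0, e r ≤ r)
    (htend : Tendsto e atTop atTop) :
    ∀ t : EuclideanSpace ℝ (Fin d),
      Tendsto (fun r =>
          volume ((annulus d r (e r)) ∆ ((fun y => t + y) '' annulus d r (e r))) /
            volume (annulus d r (e r)))
        atTop (nhds (0 : ℝ≥0∞)) := by
  intro t
  obtain ⟨n, rfl⟩ : ∃ n, d = n + 1 := ⟨d - 1, by omega⟩
  have hbound := ENNReal.tendsto_ofReal
    (tendsto_mul_add_pow_div_mul_pow_atTop htend (4 * ‖t‖ * (n + 1)) ‖t‖ n)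
  rw [ENNReal.ofReal_zero] at hbound
  refine tendsto_of_tendsto_of_tendsto_of_le_of_le' tendsto_const_nhds hbound
    (.of_forall fun _ => zero_le) ?_
  filter_upwards [eventually_gt_atTop 0] with r hr
  have hratio := measure_symmDiff_image_add_div_le volume t (hpos r hr) (hle r hr)
  simp only [finrank_euclideanSpace_fin, Nat.add_sub_cancel, Nat.cast_add, Nat.cast_one] at hratio
  exact hratio
end
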